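/- arXiv:2404.02542 — 2 statements merged into one kernel-verified Lean document; each statement's English description precedes it below -/
import Mathlib

section
/- If D is a uniformly random k₀-element subset of a finite set E and D_cal is, conditionally on D, a uniformly random ℓ-element subset of D, then conditionally on D_tr := D \ D_cal, the set D_cal is uniformly distributed over ℓ-element subsets of E \ D_tr, and E \ D = (E \ D_tr) \ D_cal. -/
open PMF Finset

/-- Uniform sampling without replacement of an `N`-element subset of `s`
(junk value `∅` if no `N`-element subset exists). -/
noncomputable def unifSub {α : Type*} [DecidableEq α] (s : Finset α) (N : ℕ) :
    PMF (Finset α) :=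
  if h : (s.powersetCard N).Nonempty then PMF.uniformOfFinset _ h else PMF.pure ∅

lemma unifSub_apply {α : Type*} [DecidableEq α] (s : Finset α) (N : ℕ)
    (h : N ≤ s.card) (a : Finset α) :
    unifSub s N a = if a ∈ s.powersetCard N then ((s.card.choose N : ENNReal))⁻¹ else 0 := by
  rw [unifSub, dif_pos (Finset.powersetCard_nonempty.2 h)]
  simp [PMF.uniformOfFinset_apply, Finset.card_powersetCard]

lemma map_pair_apply {α : Type*} [DecidableEq α] (p : PMF (Finset α))
    (g : Finset α → Finset α) (t c : Finset α) :
    (p.map fun x => (g x, x)) (t, c) = if t = g c then p c else 0 := by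
  rw [PMF.map_apply]
  rw [tsum_eq_single c ?_]
  · by_cases h : t = g c <;> simp [Prod.ext_iff, h]
  · intro b hb
    rw [if_neg]
    intro h
    exact hb (congrArg Prod.snd h).symm

lemma map_pair_const_apply {α : Type*} [DecidableEq α] (p : PMF (Finset α))
    (t' t c : Finset α) :
    (p.map fun x => (t', x)) (t, c) = if t = t' then p c else 0 :=
  map_pair_apply p (fun _ => t') t c

/-- if `D` is uniform among `k₀`-subsets of `E` and, given `D`,
`Dcal` is uniform among `ℓ`-subsets of `D`, then, conditionally on
`Dtr := D \ Dcal`, the set `Dcal` is uniform among `ℓ`-subsets of `E \ Dtr`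
(expressed as a factorization of the joint law of `(Dtr, Dcal)` through the
marginal law of `Dtr`); moreover `E \ D = (E \ Dtr) \ Dcal`. -/
theorem conditional_uniformity_given_Dtr
    {α : Type*} [DecidableEq α] (E : Finset α) (k₀ ℓ : ℕ)
    (hℓ : ℓ ≤ k₀) (hk : k₀ ≤ E.card) :
    (((unifSub E k₀).bind fun D =>
        (unifSub D ℓ).map fun Dcal => (D \ Dcal, Dcal))
      = ((((unifSub E k₀).bind fun D =>
            (unifSub D ℓ).map fun Dcal => (D \ Dcal, Dcal))).map Prod.fst).bind
          (fun Dtr => (unifSub (E \ Dtr) ℓ).map fun Dcal => (Dtr, Dcal)))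
    ∧ ∀ D Dcal : Finset α, Dcal ⊆ D → D ⊆ E →
        E \ D = (E \ (D \ Dcal)) \ Dcal := by
  classical
  set n := E.card with hn
  set m := k₀ - ℓ with hmdef
  have hml : m + ℓ = k₀ := Nat.sub_add_cancel hℓ
  have hm : m ≤ n := le_trans (Nat.sub_le _ _) hk
  have hℓn : ℓ ≤ n - m := Nat.le_sub_of_add_le (by omega)
  set v : ENNReal := ((n.choose k₀ : ENNReal))⁻¹ * ((k₀.choose ℓ : ENNReal))⁻¹ with hv
  set L : PMF (Finset α × Finset α) :=
    (unifSub E k₀).bind fun D => (unifSub D ℓ).map fun Dcal => (D \ Dcal, Dcal) with hL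
  -- Claim A : pointwise value of the joint law
  have claimA : ∀ t c : Finset α,
      L (t, c) = if t ∈ E.powersetCard m ∧ c ∈ (E \ t).powersetCard ℓ then v else 0 := by
    intro t c
    rw [hL, PMF.bind_apply]
    have hterm : ∀ D : Finset α,
        (unifSub E k₀ D) * (((unifSub D ℓ).map fun Dcal => (D \ Dcal, Dcal)) (t, c))
          = (unifSub E k₀ D) * (if t = D \ c then unifSub D ℓ c else 0) := by
      intro D
      rw [map_pair_apply (unifSub D ℓ) (fun x => D \ x) t c]
    simp only [hterm]
    by_cases hmem : t ∈ E.powersetCard m ∧ c ∈ (E \ t).powersetCard ℓ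
    · obtain ⟨ht, hc⟩ := hmem
      rw [Finset.mem_powersetCard] at ht hc
      obtain ⟨htE, htc⟩ := ht
      obtain ⟨hcE, hcc⟩ := hc
      have hdisj : Disjoint t c := by
        rw [Finset.subset_sdiff] at hcE
        exact hcE.2.symm
      have hcsub : c ⊆ E := hcE.trans (Finset.sdiff_subset)
      have hcardu : (t ∪ c).card = k₀ := by
        rw [Finset.card_union_of_disjoint hdisj, htc, hcc, hml]
      have huE : t ∪ c ∈ E.powersetCard k₀ :=
        Finset.mem_powersetCard.2 ⟨Finset.union_subset htE hcsub, hcardu⟩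
      have hcu : c ∈ (t ∪ c).powersetCard ℓ :=
        Finset.mem_powersetCard.2 ⟨Finset.subset_union_right, hcc⟩
      have htu : t = (t ∪ c) \ c := by
        rw [Finset.union_sdiff_cancel_right hdisj]
      rw [tsum_eq_single (t ∪ c) ?_]
      · rw [if_pos (⟨Finset.mem_powersetCard.2 ⟨htE, htc⟩,
            Finset.mem_powersetCard.2 ⟨hcE, hcc⟩⟩ :
            t ∈ E.powersetCard m ∧ c ∈ (E \ t).powersetCard ℓ), if_pos htu,
          unifSub_apply E k₀ hk, if_pos huE,
          unifSub_apply (t ∪ c) ℓ (by rw [hcardu]; exact hℓ), if_pos hcu, hcardu]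
      · intro D hD
        rcases eq_or_ne (unifSub E k₀ D) 0 with h0 | h0
        · rw [h0, zero_mul]
        split_ifs with htD
        · rcases eq_or_ne (unifSub D ℓ c) 0 with h1 | h1
          · rw [h1, mul_zero]
          · exfalso
            apply hD
            have hDE : D ∈ E.powersetCard k₀ := by
              by_contra hnot
              rw [unifSub_apply E k₀ hk, if_neg hnot] at h0
              exact h0 rfl
            have hDcard : k₀ ≤ D.card := by
              rw [(Finset.mem_powersetCard.1 hDE).2]
            have hcD : c ∈ D.powersetCard ℓ := by
              by_contra hnot
              rw [unifSub_apply D ℓ (hℓ.trans hDcard), if_neg hnot] at h1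
              exact h1 rfl
            rw [htD, Finset.sdiff_union_of_subset (Finset.mem_powersetCard.1 hcD).1]
        · rw [mul_zero]
    · rw [if_neg hmem]
      apply ENNReal.tsum_eq_zero.mpr
      intro D
      rcases eq_or_ne (unifSub E k₀ D) 0 with h0 | h0
      · rw [h0, zero_mul]
      split_ifs with htD
      · rcases eq_or_ne (unifSub D ℓ c) 0 with h1 | h1
        · rw [h1, mul_zero]
        · exfalso
          apply hmem
          have hDE : D ∈ E.powersetCard k₀ := by
            by_contra hnot
            rw [unifSub_apply E k₀ hk, if_neg hnot] at h0
            exact h0 rfl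
          obtain ⟨hDEs, hDc⟩ := Finset.mem_powersetCard.1 hDE
          have hcD : c ∈ D.powersetCard ℓ := by
            by_contra hnot
            rw [unifSub_apply D ℓ (by rw [hDc]; exact hℓ), if_neg hnot] at h1
            exact h1 rfl
          obtain ⟨hcDs, hcc⟩ := Finset.mem_powersetCard.1 hcD
          constructor
          · refine Finset.mem_powersetCard.2 ⟨?_, ?_⟩
            · rw [htD]; exact (Finset.sdiff_subset).trans hDEs
            · rw [htD, Finset.card_sdiff_of_subset hcDs, hDc, hcc]
          · refine Finset.mem_powersetCard.2 ⟨?_, hcc⟩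
            rw [Finset.subset_sdiff]
            refine ⟨hcDs.trans hDEs, ?_⟩
            rw [htD]
            exact disjoint_sdiff_self_right
      · rw [mul_zero]
  -- Claim B : the marginal of Dtr
  have claimB : ∀ t : Finset α,
      (L.map Prod.fst) t
        = if t ∈ E.powersetCard m then (((n - m).choose ℓ : ENNReal)) * v else 0 := by
    intro t
    rw [PMF.map_apply, ENNReal.tsum_prod']
    rw [tsum_eq_single t ?_]
    · trans (∑' b : Finset α,
          if t ∈ E.powersetCard m ∧ b ∈ (E \ t).powersetCard ℓ then v else 0)
      · exact tsum_congr fun b => by rw [if_pos rfl, claimA]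
      by_cases ht : t ∈ E.powersetCard m
      · rw [if_pos ht]
        have hz : ∀ b ∉ (E \ t).powersetCard ℓ,
            (if t ∈ E.powersetCard m ∧ b ∈ (E \ t).powersetCard ℓ then v else 0) = 0 := by
          intro b hb
          exact if_neg (fun h => hb h.2)
        rw [tsum_eq_sum hz]
        trans ∑ _b ∈ (E \ t).powersetCard ℓ, v
        · exact Finset.sum_congr rfl (fun b hb => if_pos ⟨ht, hb⟩)
        · rw [Finset.sum_const, Finset.card_powersetCard,
            Finset.card_sdiff_of_subset (Finset.mem_powersetCard.1 ht).1,
            (Finset.mem_powersetCard.1 ht).2, nsmul_eq_mul]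
      · rw [if_neg ht]
        apply ENNReal.tsum_eq_zero.mpr
        intro b
        apply if_neg
        exact fun h => ht h.1
    · intro a ha
      apply ENNReal.tsum_eq_zero.mpr
      intro b
      exact if_neg (fun h => ha h.symm)
  constructor
  · apply PMF.ext
    rintro ⟨t, c⟩
    rw [claimA, PMF.bind_apply]
    refine Eq.symm ?_
    trans (∑' t' : Finset α,
        ((L.map Prod.fst) t') * (if t = t' then unifSub (E \ t') ℓ c else 0))
    · exact tsum_congr fun t' => by rw [map_pair_const_apply]
    rw [tsum_eq_single t ?_]
    · rw [if_pos rfl, claimB]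
      by_cases ht : t ∈ E.powersetCard m
      · have hcard : (E \ t).card = n - m := by
          rw [Finset.card_sdiff_of_subset (Finset.mem_powersetCard.1 ht).1,
            (Finset.mem_powersetCard.1 ht).2]
        rw [if_pos ht, unifSub_apply (E \ t) ℓ (by rw [hcard]; exact hℓn), hcard]
        by_cases hc : c ∈ (E \ t).powersetCard ℓ
        · have hAB : t ∈ E.powersetCard m ∧ c ∈ (E \ t).powersetCard ℓ := ⟨ht, hc⟩
          rw [if_pos hc, if_pos hAB, mul_right_comm,
            ENNReal.mul_inv_cancel (by exact_mod_cast (Nat.choose_pos hℓn).ne')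
              (ENNReal.natCast_ne_top _), one_mul]
        · have h2 : ¬(t ∈ E.powersetCard m ∧ c ∈ (E \ t).powersetCard ℓ) := fun h => hc h.2
          rw [if_neg h2, if_neg hc, mul_zero]
      · have h2 : ¬(t ∈ E.powersetCard m ∧ c ∈ (E \ t).powersetCard ℓ) := fun h => ht h.1
        rw [if_neg ht, if_neg h2, zero_mul]
    · intro t' ht'
      have h2 : ¬(t = t') := fun h => ht' h.symm
      rw [if_neg h2, mul_zero]
  · intro D Dcal h1 h2
    ext a
    have h3 : a ∈ Dcal → a ∈ D := fun h => h1 h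
    simp only [Finset.mem_sdiff, not_and, not_not]
    tauto
end

section
/- Let (p_a)_{1≤a≤m} be [0,1]-valued random variables such that each p_a for a ≤ m₀ is super-uniform (P(p_a ≤ t) ≤ t for all t) and the family is PRDS on {1,…,m₀}. Then the Benjamini–Hochberg procedure at level α satisfies E[FDP(R_BH, {1,…,m₀})] ≤ α·m₀/m ≤ α. -/
open Finset MeasureTheory

/-- The false discovery proportion `FDP(R, H₀) = |R ∩ H₀| / max(|R|, 1)`. -/
noncomputable def FDP {ι : Type*} [DecidableEq ι] (R H₀ : Finset ι) : ℝ :=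
  ((R ∩ H₀).card : ℝ) / (max R.card 1 : ℕ)

/-- Sorted list of the p-values `(p i)_{i : Fin m}` (with multiplicity). -/
noncomputable def sortedFin (m : ℕ) (p : Fin m → ℝ) : List ℝ :=
  Multiset.sort (Multiset.ofList (List.ofFn p)) (· ≤ ·)

/-- `k`-th order statistic `p_(k)` (with the convention `p_(0) = 0`). -/
noncomputable def porderFin (m : ℕ) (p : Fin m → ℝ) (k : ℕ) : ℝ :=
  if k = 0 then 0 else (sortedFin m p).getD (k - 1) 0

/-- `k̂ = max {k ≤ m : p_(k) ≤ α k / m}`. -/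
noncomputable def khatFin (α : ℝ) (m : ℕ) (p : Fin m → ℝ) : ℕ :=
  sSup {k : ℕ | k ≤ m ∧ porderFin m p k ≤ α * k / m}

/-- The BH rejection set at level `α` (threshold form): `{i : p_i ≤ α k̂ / m}`. -/
noncomputable def RBHFin (α : ℝ) (m : ℕ) (p : Fin m → ℝ) : Finset (Fin m) :=
  Finset.univ.filter fun i => p i ≤ α * khatFin α m p / m

/-! Write `N(t) = countLE p t` for the number of p-values at most `t`. Since `p_(k) ≤ t ↔ k ≤ N(t)`,
the BH procedure rejects exactly `k̂` hypotheses, so `FDP = ∑_{a ∈ H₀} 1{p_a ≤ α k̂ / m} / k̂`, and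
`k̂` is a nonincreasing function of the p-values: every `{k̂ ≤ k}` is an increasing set.

Fix a null `a` and put `r_k = P(k̂ ≤ k | p_a ≤ α k / m)`. PRDS says that conditioning on the larger
event `p_a ≤ α (k + 1) / m` can only increase `P(k̂ ≤ k | ·)`, hence
`P(k̂ = k + 1, p_a ≤ α (k + 1) / m) ≤ (r_{k+1} - r_k) P(p_a ≤ α (k + 1) / m)`,
which is at most `(r_{k+1} - r_k) α (k + 1) / m` by super-uniformity. Dividing by `k + 1` and
telescoping gives `E[1{p_a ≤ α k̂ / m} / k̂] ≤ α / m`; summing over the `m₀` nulls gives the bound.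
-/

theorem List.Pairwise.getElem_le_iff_lt_countP {β : Type*} [LinearOrder β] {L : List β}
    (hL : L.Pairwise (· ≤ ·)) (t : β) {k : ℕ} (hk : k < L.length) :
    L[k] ≤ t ↔ k < L.countP (· ≤ t) := by
  induction L generalizing k with
  | nil => simp at hk
  | cons x L ih =>
    rw [List.pairwise_cons] at hL
    by_cases hx : x ≤ t
    · cases k with
      | zero => simp [hx]
      | succ k => simp [ih hL.2, hx]
    · have hgt : ∀ y ∈ x :: L, ¬ y ≤ t := by
        simp only [List.mem_cons, forall_eq_or_imp]
        exact ⟨hx, fun y hy hyt => hx ((hL.1 y hy).trans hyt)⟩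
      have hzero : (x :: L).countP (· ≤ t) = 0 :=
        List.countP_eq_zero.2 fun y hy => by simpa using hgt y hy
      simp only [hzero, hgt _ (List.getElem_mem hk), Nat.not_lt_zero]

noncomputable def countLE {ι : Type*} [Fintype ι] (x : ι → ℝ) (t : ℝ) : ℕ :=
  #{i | x i ≤ t}

section countLE
variable {ι : Type*} [Fintype ι]

theorem countLE_mono (x : ι → ℝ) : Monotone (countLE x) :=
  fun _ _ hst => card_le_card fun _ => by simpa using fun hi => hi.trans hst

theorem countLE_anti {x y : ι → ℝ} (hxy : x ≤ y) (t : ℝ) : countLE y t ≤ countLE x t :=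
  card_le_card fun i => by simpa using (hxy i).trans

theorem measurable_countLE (t : ℝ) : Measurable fun x : ι → ℝ => countLE x t := by
  simp_rw [countLE, card_filter]
  exact Finset.measurable_sum _ fun i _ => measurable_const.ite
    (measurableSet_le (measurable_pi_apply i) measurable_const) measurable_const

end countLE

theorem countP_sortedFin (m : ℕ) (x : Fin m → ℝ) (t : ℝ) :
    (sortedFin m x).countP (· ≤ t) = countLE x t := by
  rw [← Multiset.coe_countP, sortedFin, Multiset.sort_eq, ← Fin.univ_val_map, Multiset.countP_map]
  rfl

theorem porderFin_le_iff {m : ℕ} (x : Fin m → ℝ) {k : ℕ} (hk : 1 ≤ k) (hkm : k ≤ m) (t : ℝ) :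
    porderFin m x k ≤ t ↔ k ≤ countLE x t := by
  have hlen : k - 1 < (sortedFin m x).length := by simp [sortedFin]; omega
  rw [porderFin, if_neg (by omega), List.getD_eq_getElem _ _ hlen,
    (show (sortedFin m x).Pairwise (· ≤ ·) from Multiset.pairwise_sort _ _).getElem_le_iff_lt_countP
      t hlen, countP_sortedFin]
  omega

theorem khatFin_mem (α : ℝ) (m : ℕ) (x : Fin m → ℝ) :
    khatFin α m x ∈ {k : ℕ | k ≤ m ∧ porderFin m x k ≤ α * k / m} :=
  Nat.sSup_mem ⟨0, by simp [porderFin]⟩ ⟨m, fun _ hk => hk.1⟩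

theorem khatFin_le (α : ℝ) (m : ℕ) (x : Fin m → ℝ) : khatFin α m x ≤ m :=
  (khatFin_mem α m x).1

theorem khatFin_le_countLE (α : ℝ) (m : ℕ) (x : Fin m → ℝ) :
    khatFin α m x ≤ countLE x (α * khatFin α m x / m) := by
  rcases Nat.eq_zero_or_pos (khatFin α m x) with h0 | hpos
  · simp [h0]
  · exact (porderFin_le_iff x hpos (khatFin_le α m x) _).1 (khatFin_mem α m x).2

theorem le_khatFin_of_le_countLE {α : ℝ} {m : ℕ} {x : Fin m → ℝ} {k : ℕ} (hk : 1 ≤ k)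
    (hkm : k ≤ m) (h : k ≤ countLE x (α * k / m)) : k ≤ khatFin α m x :=
  le_csSup ⟨m, fun _ hj => hj.1⟩ ⟨hkm, (porderFin_le_iff x hk hkm _).2 h⟩

theorem khatFin_le_iff {α : ℝ} {m : ℕ} {x : Fin m → ℝ} {k : ℕ} :
    khatFin α m x ≤ k ↔ ∀ j ∈ Ioc k m, countLE x (α * j / m) < j := by
  constructor
  · intro h j hj
    obtain ⟨hkj, hjm⟩ := mem_Ioc.1 hj
    by_contra! hcon
    exact absurd (le_khatFin_of_le_countLE (by omega) hjm hcon) (by omega)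
  · intro h
    by_contra! hcon
    exact (khatFin_le_countLE α m x).not_gt (h _ (mem_Ioc.2 ⟨hcon, khatFin_le α m x⟩))

theorem khatFin_antitone (α : ℝ) (m : ℕ) : Antitone (khatFin α m) := by
  intro x y hxy
  rcases Nat.eq_zero_or_pos (khatFin α m y) with h0 | hpos
  · simp [h0]
  · exact le_khatFin_of_le_countLE hpos (khatFin_le α m y)
      ((khatFin_le_countLE α m y).trans (countLE_anti hxy _))

theorem measurable_khatFin (α : ℝ) (m : ℕ) : Measurable (khatFin α m) := by
  refine measurable_of_Iic fun k => ?_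
  have : khatFin α m ⁻¹' Set.Iic k = ⋂ j ∈ Ioc k m, {x | countLE x (α * j / m) < j} := by
    ext x
    simp [khatFin_le_iff]
  rw [this]
  exact Finset.measurableSet_biInter _ fun j _ => measurable_countLE _ measurableSet_Iio

theorem card_RBHFin {α : ℝ} {m : ℕ} (hα : 0 ≤ α) (x : Fin m → ℝ) :
    #(RBHFin α m x) = khatFin α m x := by
  have hcard : #(RBHFin α m x) = countLE x (α * khatFin α m x / m) := rfl
  have hge : khatFin α m x ≤ #(RBHFin α m x) := hcard ▸ khatFin_le_countLE α m x
  refine le_antisymm ?_ hge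
  rcases Nat.eq_zero_or_pos #(RBHFin α m x) with h0 | hpos
  · simp [h0]
  refine le_khatFin_of_le_countLE hpos ((card_le_univ _).trans_eq (Fintype.card_fin m)) ?_
  calc #(RBHFin α m x) = countLE x (α * khatFin α m x / m) := hcard
    _ ≤ countLE x (α * #(RBHFin α m x) / m) := countLE_mono x (by gcongr)

theorem FDP_RBHFin {α : ℝ} {m : ℕ} (hα : 0 ≤ α) (x : Fin m → ℝ) (H₀ : Finset (Fin m)) :
    FDP (RBHFin α m x) H₀ =
      ∑ a ∈ H₀, if x a ≤ α / m * khatFin α m x then (khatFin α m x : ℝ)⁻¹ else 0 := by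
  rw [sum_ite, sum_const_zero, add_zero, sum_const, nsmul_eq_mul, FDP]
  rcases Nat.eq_zero_or_pos (khatFin α m x) with h0 | hpos
  · have hR : RBHFin α m x = ∅ := card_eq_zero.1 ((card_RBHFin hα x).trans h0)
    simp [hR, h0]
  · rw [card_RBHFin hα, max_eq_left hpos, div_eq_mul_inv, RBHFin, filter_inter, univ_inter]
    simp_rw [div_mul_eq_mul_div]

section PRDS
variable {Ω : Type*} [MeasurableSpace Ω] {μ : Measure Ω} {X : Ω → ℝ}

/-- `P(D | X ≤ t)`; it is `0` when `{X ≤ t}` is null. -/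
noncomputable def condProbLE (μ : Measure Ω) (X : Ω → ℝ) (D : Set Ω) (t : ℝ) : ℝ :=
  μ.real (D ∩ {ω | X ω ≤ t}) / μ.real {ω | X ω ≤ t}

theorem condProbLE_nonneg (D : Set Ω) (t : ℝ) : 0 ≤ condProbLE μ X D t :=
  div_nonneg measureReal_nonneg measureReal_nonneg

variable [IsFiniteMeasure μ]

theorem condProbLE_le_one (D : Set Ω) (t : ℝ) : condProbLE μ X D t ≤ 1 :=
  div_le_one_of_le₀ (measureReal_mono Set.inter_subset_right) measureReal_nonneg

theorem measureReal_inter_eq_condProbLE_mul (D : Set Ω) (t : ℝ) :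
    μ.real (D ∩ {ω | X ω ≤ t}) = condProbLE μ X D t * μ.real {ω | X ω ≤ t} := by
  by_cases h : μ.real {ω | X ω ≤ t} = 0
  · rw [h, mul_zero, measureReal_mono_null Set.inter_subset_right h]
  · rw [condProbLE, div_mul_cancel₀ _ h]

theorem condProbLE_mono_set {D D' : Set Ω} (hD : D ⊆ D') (t : ℝ) :
    condProbLE μ X D t ≤ condProbLE μ X D' t :=
  div_le_div_of_nonneg_right (measureReal_mono (Set.inter_subset_inter_left _ hD))
    measureReal_nonneg

theorem monotone_condProbLE_of_measure_mul_le {D : Set Ω}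
    (h : ∀ s t : ℝ, s ≤ t → μ (D ∩ {ω | X ω ≤ s}) * μ {ω | X ω ≤ t}
      ≤ μ (D ∩ {ω | X ω ≤ t}) * μ {ω | X ω ≤ s}) :
    Monotone (condProbLE μ X D) := by
  intro s t hst
  rcases (measureReal_nonneg (μ := μ) (s := {ω | X ω ≤ s})).eq_or_lt with h0 | hpos
  · rw [condProbLE, ← h0, div_zero]
    exact condProbLE_nonneg D t
  have hpos' : 0 < μ.real {ω | X ω ≤ t} :=
    hpos.trans_le (measureReal_mono fun ω (h : X ω ≤ s) => h.trans hst)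
  rw [condProbLE, condProbLE, div_le_div_iff₀ hpos hpos']
  simp only [Measure.real, ← ENNReal.toReal_mul]
  exact ENNReal.toReal_mono (by finiteness) (h s t hst)

variable {V : Ω → ℕ} {c : ℝ}

theorem measureReal_eq_succ_inter_mul_inv_le (hV : Measurable V) (hc : 0 ≤ c)
    (hsuper : ∀ t : ℝ, μ {ω | X ω ≤ t} ≤ ENNReal.ofReal t)
    (hprds : ∀ k : ℕ, Monotone (condProbLE μ X {ω | V ω ≤ k})) (k : ℕ) :
    μ.real ({ω | V ω = k + 1} ∩ {ω | X ω ≤ c * ↑(k + 1)}) * (↑(k + 1) : ℝ)⁻¹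
      ≤ c * (condProbLE μ X {ω | V ω ≤ k + 1} (c * ↑(k + 1))
        - condProbLE μ X {ω | V ω ≤ k} (c * k)) := by
  set A := {ω | X ω ≤ c * ↑(k + 1)}
  have hsplit : μ.real ({ω | V ω = k + 1} ∩ A)
      = μ.real ({ω | V ω ≤ k + 1} ∩ A) - μ.real ({ω | V ω ≤ k} ∩ A) := by
    have h := measureReal_inter_add_sdiff (μ := μ) (s := {ω | V ω ≤ k + 1} ∩ A)
      (hV (measurableSet_Iic (a := k)))
    have hlow : {ω | V ω ≤ k + 1} ∩ A ∩ V ⁻¹' Set.Iic k = {ω | V ω ≤ k} ∩ A := by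
      rw [Set.inter_right_comm]
      congr 1
      ext ω
      simp only [Set.mem_inter_iff, Set.mem_preimage, Set.mem_Iic, Set.mem_ofPred_eq]
      omega
    have htop : ({ω | V ω ≤ k + 1} ∩ A) \ V ⁻¹' Set.Iic k = {ω | V ω = k + 1} ∩ A := by
      rw [Set.inter_sdiff_right_comm]
      congr 1
      ext ω
      simp only [Set.mem_sdiff, Set.mem_preimage, Set.mem_Iic, Set.mem_ofPred_eq]
      omega
    rw [hlow, htop] at h
    linarith
  have hck : c * k ≤ c * ↑(k + 1) := by gcongr; simp
  have hcond_mono := hprds k hck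
  have hcond_set := condProbLE_mono_set (μ := μ) (X := X) (D := {ω | V ω ≤ k})
    (D' := {ω | V ω ≤ k + 1}) (fun ω (h : V ω ≤ k) => (show V ω ≤ k + 1 by omega)) (c * ↑(k + 1))
  have hA : μ.real A ≤ c * ↑(k + 1) := ENNReal.toReal_le_of_le_ofReal (by positivity) (hsuper _)
  calc μ.real ({ω | V ω = k + 1} ∩ A) * (↑(k + 1) : ℝ)⁻¹
      = (condProbLE μ X {ω | V ω ≤ k + 1} (c * ↑(k + 1))
          - condProbLE μ X {ω | V ω ≤ k} (c * ↑(k + 1))) * μ.real A * (↑(k + 1) : ℝ)⁻¹ := by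
        rw [hsplit, measureReal_inter_eq_condProbLE_mul, measureReal_inter_eq_condProbLE_mul]
        ring
    _ ≤ (condProbLE μ X {ω | V ω ≤ k + 1} (c * ↑(k + 1))
          - condProbLE μ X {ω | V ω ≤ k} (c * k)) * (c * ↑(k + 1)) * (↑(k + 1) : ℝ)⁻¹ := by
        gcongr ?_ * _
        exact mul_le_mul (by linarith) hA measureReal_nonneg (by linarith)
    _ = c * (condProbLE μ X {ω | V ω ≤ k + 1} (c * ↑(k + 1))
          - condProbLE μ X {ω | V ω ≤ k} (c * k)) := by
        field_simp

theorem sum_measureReal_eq_inter_mul_inv_le (hV : Measurable V) (hc : 0 ≤ c)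
    (hsuper : ∀ t : ℝ, μ {ω | X ω ≤ t} ≤ ENNReal.ofReal t)
    (hprds : ∀ k : ℕ, Monotone (condProbLE μ X {ω | V ω ≤ k})) (n : ℕ) :
    ∑ k ∈ range (n + 1), μ.real ({ω | V ω = k} ∩ {ω | X ω ≤ c * k}) * (k : ℝ)⁻¹ ≤ c := by
  rw [sum_range_succ', Nat.cast_zero, inv_zero, mul_zero, add_zero]
  calc ∑ k ∈ range n,
        μ.real ({ω | V ω = k + 1} ∩ {ω | X ω ≤ c * ↑(k + 1)}) * (↑(k + 1) : ℝ)⁻¹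
      ≤ ∑ k ∈ range n, c * (condProbLE μ X {ω | V ω ≤ k + 1} (c * ↑(k + 1))
          - condProbLE μ X {ω | V ω ≤ k} (c * k)) :=
        sum_le_sum fun k _ => measureReal_eq_succ_inter_mul_inv_le hV hc hsuper hprds k
    _ = c * (condProbLE μ X {ω | V ω ≤ n} (c * n)
          - condProbLE μ X {ω | V ω ≤ 0} (c * (0 : ℕ))) := by
        rw [← mul_sum, sum_range_sub (fun k => condProbLE μ X {ω | V ω ≤ k} (c * k))]
    _ ≤ c * 1 := by
        gcongr
        linarith [condProbLE_le_one (μ := μ) (X := X) {ω | V ω ≤ n} (c * n),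
          condProbLE_nonneg (μ := μ) (X := X) {ω | V ω ≤ 0} (c * (0 : ℕ))]
    _ = c := mul_one c

theorem setIntegral_inv_le_of_prds (hV : Measurable V) (hX : Measurable X) {n : ℕ}
    (hVn : ∀ ω, V ω ≤ n) (hc : 0 ≤ c)
    (hsuper : ∀ t : ℝ, μ {ω | X ω ≤ t} ≤ ENNReal.ofReal t)
    (hprds : ∀ k : ℕ, Monotone (condProbLE μ X {ω | V ω ≤ k})) :
    ∫ ω in {ω | X ω ≤ c * V ω}, (V ω : ℝ)⁻¹ ∂μ ≤ c := by
  have hmeas : ∀ k : ℕ, MeasurableSet ({ω | V ω = k} ∩ {ω | X ω ≤ c * k}) := fun k =>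
    (hV (measurableSet_singleton k)).inter (measurableSet_le hX measurable_const)
  have hsplit : ∀ ω, {ω | X ω ≤ c * V ω}.indicator (fun ω => (V ω : ℝ)⁻¹) ω
      = ∑ k ∈ range (n + 1),
          ({ω | V ω = k} ∩ {ω | X ω ≤ c * k}).indicator (fun _ => (k : ℝ)⁻¹) ω := by
    intro ω
    rw [sum_eq_single (V ω)]
    · simp [Set.indicator_apply]
    · intro k _ hk
      exact Set.indicator_of_notMem (fun h => hk h.1.symm) _
    · exact fun h => absurd (mem_range.2 (Nat.lt_succ_of_le (hVn ω))) h
  rw [← integral_indicator (measurableSet_le hX (by fun_prop))]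
  simp only [hsplit]
  rw [integral_finsetSum _ fun k _ => (integrable_const _).indicator (hmeas k)]
  simp_rw [integral_indicator_const _ (hmeas _), smul_eq_mul]
  exact sum_measureReal_eq_inter_mul_inv_le hV hc hsuper hprds n

theorem integrable_indicator_natCast_inv (hV : Measurable V) {s : Set Ω} (hs : MeasurableSet s) :
    Integrable (s.indicator fun ω => (V ω : ℝ)⁻¹) μ :=
  (Integrable.of_bound (by fun_prop) 1 (ae_of_all _ fun ω => by
    simpa using Nat.cast_inv_le_one (V ω))).indicator hs

end PRDS

theorem BH_FDR_control_under_PRDS_general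
    {Ω : Type*} [MeasurableSpace Ω] (μ : Measure Ω) [IsProbabilityMeasure μ]
    (m m₀ : ℕ) (hm₀ : m₀ ≤ m)
    (α : ℝ) (hα0 : 0 < α)
    (p : Fin m → Ω → ℝ) (hmeas : ∀ a, Measurable (p a))
    (hsuper : ∀ a : Fin m, (a : ℕ) < m₀ → ∀ t : ℝ,
      μ {ω | p a ω ≤ t} ≤ ENNReal.ofReal t)
    (hPRDS : ∀ a : Fin m, (a : ℕ) < m₀ →
      ∀ D : Set (Fin m → ℝ), MeasurableSet D → IsUpperSet D →
      ∀ t₁ t₂ : ℝ, t₁ ≤ t₂ →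
        μ ({ω | (fun i => p i ω) ∈ D} ∩ {ω | p a ω ≤ t₁}) * μ {ω | p a ω ≤ t₂}
          ≤ μ ({ω | (fun i => p i ω) ∈ D} ∩ {ω | p a ω ≤ t₂})
              * μ {ω | p a ω ≤ t₁}) :
    (∫ ω, FDP (RBHFin α m (fun i => p i ω))
        (Finset.univ.filter fun a : Fin m => (a : ℕ) < m₀) ∂μ) ≤ α * m₀ / m
    ∧ α * m₀ / m ≤ α := by
  set V : Ω → ℕ := fun ω => khatFin α m fun i => p i ω
  have hV : Measurable V := (measurable_khatFin α m).comp (measurable_pi_lambda _ hmeas)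
  have hrej : ∀ a, MeasurableSet {ω | p a ω ≤ α / m * V ω} := fun a =>
    measurableSet_le (hmeas a) (by fun_prop)
  have hnull : ∀ a : Fin m, (a : ℕ) < m₀ →
      ∫ ω in {ω | p a ω ≤ α / m * V ω}, (V ω : ℝ)⁻¹ ∂μ ≤ α / m := fun a ha =>
    setIntegral_inv_le_of_prds hV (hmeas a) (fun ω => khatFin_le α m _) (by positivity)
      (hsuper a ha) fun k => monotone_condProbLE_of_measure_mul_le <|
        hPRDS a ha _ (measurable_khatFin α m measurableSet_Iic)
          fun _ _ hxy hx => (khatFin_antitone α m hxy).trans hx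
  refine ⟨?_, div_le_of_le_mul₀ (Nat.cast_nonneg m) hα0.le (by gcongr)⟩
  set H₀ := univ.filter fun a : Fin m => (a : ℕ) < m₀
  calc ∫ ω, FDP (RBHFin α m fun i => p i ω) H₀ ∂μ
      = ∑ a ∈ H₀, ∫ ω in {ω | p a ω ≤ α / m * V ω}, (V ω : ℝ)⁻¹ ∂μ := by
        simp_rw [← integral_indicator (hrej _)]
        rw [← integral_finsetSum _ fun a _ => integrable_indicator_natCast_inv hV (hrej a)]
        congr with ω
        simp [FDP_RBHFin hα0.le, Set.indicator_apply, V]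
    _ ≤ ∑ a ∈ H₀, α / m := sum_le_sum fun a ha => hnull a (mem_filter.1 ha).2
    _ = α * m₀ / m := by
        rw [sum_const, Fin.card_filter_val_lt, min_eq_right hm₀, nsmul_eq_mul]
        ring

/-- Benjamini–Yekutieli: if the p-values `(p_a)_{a ≤ m}` are
marginally super-uniform on the nulls `{1, …, m₀}` and PRDS on the nulls, then
the BH procedure at level `α` satisfies
`E[FDP(R_BH, {1,…,m₀})] ≤ α m₀ / m ≤ α`. -/
theorem BH_FDR_control_under_PRDS
    {Ω : Type*} [MeasurableSpace Ω] (μ : Measure Ω) [IsProbabilityMeasure μ]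
    (m m₀ : ℕ) (hm : 1 ≤ m) (hm₀ : m₀ ≤ m)
    (α : ℝ) (hα0 : 0 < α) (hα1 : α < 1)
    (p : Fin m → Ω → ℝ) (hmeas : ∀ a, Measurable (p a))
    (hrange : ∀ a ω, p a ω ∈ Set.Icc (0 : ℝ) 1)
    (hsuper : ∀ a : Fin m, (a : ℕ) < m₀ → ∀ t : ℝ,
      μ {ω | p a ω ≤ t} ≤ ENNReal.ofReal t)
    (hPRDS : ∀ a : Fin m, (a : ℕ) < m₀ →
      ∀ D : Set (Fin m → ℝ), MeasurableSet D → IsUpperSet D →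
      ∀ t₁ t₂ : ℝ, t₁ ≤ t₂ →
        μ ({ω | (fun i => p i ω) ∈ D} ∩ {ω | p a ω ≤ t₁}) * μ {ω | p a ω ≤ t₂}
          ≤ μ ({ω | (fun i => p i ω) ∈ D} ∩ {ω | p a ω ≤ t₂})
              * μ {ω | p a ω ≤ t₁}) :
    (∫ ω, FDP (RBHFin α m (fun i => p i ω))
        (Finset.univ.filter fun a : Fin m => (a : ℕ) < m₀) ∂μ) ≤ α * m₀ / m
    ∧ α * m₀ / m ≤ α :=
  BH_FDR_control_under_PRDS_general μ m m₀ hm₀ α hα0 p hmeas hsuper hPRDS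
end
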